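/- Fix c ≥ 1 and take the jump set J = {−c, −c+1, …, −1, +1}. For n ≥ 0 and k ≥ 0 let q_{n,k} be the number of excursions with catastrophes (with jump set J) of length n containing exactly one catastrophe, occurring as the final step and having size k. Then q_{n,k} = 0 unless k ≥ c + 1 and n ≥ 2, and for every j ≥ 0 and n ≥ 2, q_{n, c+1+j} = Σ_{a+b = n−2} M^{(c)}_a · M_{b,j}, where M^{(c)}_a is the number of catastrophe-free meanders of length a ending at altitude c and M_{b,j} is the number of catastrophe-free meanders of length b ending at altitude j. -/

import Mathlib

/-!
Deleting the final catastrophe of a path counted by `q n k` leaves a catastrophe-free meander of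
length `n - 1` ending at `k`, and any such meander can be completed this way as soon as `k > c`;
so `q n k` vanishes unless `c < k ≤ n - 1`. Since the only up-step is `+1`, a meander ending at
`c + 1 + j` passes from `c` to `c + 1` for the last time by a `+1` step. Cutting it there gives a
meander ending at `c` and a path that stays at or above `c + 1`, i.e. a translated meander ending
at `j`; the cut is unique because the tail never returns below `c + 1`.
-/

/-- Validity of a path with catastrophes over the jump set `J`, starting from
altitude `h`: each step is either a jump `s ∈ J` keeping the altitude
nonnegative, or a catastrophe `s = -h` from an altitude `h > 0` with `-h ∉ J`
(landing at altitude `0`). -/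
def CatValidFrom (J : Finset ℤ) : ℤ → List ℤ → Prop
  | _, [] => True
  | h, s :: r =>
    ((s ∈ J ∧ 0 ≤ h + s) ∨ (s = -h ∧ 0 < h ∧ -h ∉ J)) ∧ CatValidFrom J (h + s) r

/-- Validity of a catastrophe-free meander over the jump set `J`, starting from
altitude `h`: every step belongs to `J` and all partial altitudes are
nonnegative. -/
def FreeFrom (J : Finset ℤ) : ℤ → List ℤ → Prop
  | _, [] => True
  | h, s :: r => (s ∈ J ∧ 0 ≤ h + s) ∧ FreeFrom J (h + s) r

/-- The number of catastrophe steps of a path starting at altitude `h`. -/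
def catNum (J : Finset ℤ) : ℤ → List ℤ → ℕ
  | _, [] => 0
  | h, s :: r => (if s = -h ∧ 0 < h ∧ -h ∉ J then 1 else 0) + catNum J (h + s) r

/-- The jump set `J = {-c, …, -1, +1}` of Łukasiewicz-like paths. -/
noncomputable def lukJ (c : ℕ) : Finset ℤ := insert 1 (Finset.Icc (-(c : ℤ)) (-1))

/-- `q n k` (for the jump set `lukJ c`): the number of excursions with
catastrophes of length `n` containing exactly one catastrophe, occurring as the
final step and having size `k` (i.e. jumping from altitude `k` to `0`). -/
noncomputable def qCountSize (c : ℕ) (n : ℕ) (k : ℕ) : ℕ :=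
  Nat.card {l : List ℤ //
    l.length = n ∧ CatValidFrom (lukJ c) 0 l ∧ l.sum = 0 ∧
      ∃ l' : List ℤ, l = l' ++ [-l'.sum] ∧ 0 < l'.sum ∧ -l'.sum ∉ lukJ c ∧
        catNum (lukJ c) 0 l' = 0 ∧ l'.sum = (k : ℤ)}

/-- The number of catastrophe-free meanders over `lukJ c` of length `n`
ending at altitude `k`. -/
noncomputable def freeMCount (c : ℕ) (n : ℕ) (k : ℤ) : ℕ :=
  Nat.card {l : List ℤ // l.length = n ∧ FreeFrom (lukJ c) 0 l ∧ l.sum = k}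

open Finset

section Meanders

variable {J : Finset ℤ}

theorem freeFrom_append {h : ℤ} {l₁ l₂ : List ℤ} :
    FreeFrom J h (l₁ ++ l₂) ↔ FreeFrom J h l₁ ∧ FreeFrom J (h + l₁.sum) l₂ := by
  induction l₁ generalizing h with
  | nil => simp [FreeFrom]
  | cons s r ih => simp [FreeFrom, ih, add_assoc, and_assoc]

theorem catValidFrom_append {h : ℤ} {l₁ l₂ : List ℤ} :
    CatValidFrom J h (l₁ ++ l₂) ↔ CatValidFrom J h l₁ ∧ CatValidFrom J (h + l₁.sum) l₂ := by
  induction l₁ generalizing h with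
  | nil => simp [CatValidFrom]
  | cons s r ih => simp [CatValidFrom, ih, add_assoc, and_assoc]

theorem freeFrom_iff_catValidFrom_and_catNum_eq_zero {h : ℤ} {l : List ℤ} :
    FreeFrom J h l ↔ CatValidFrom J h l ∧ catNum J h l = 0 := by
  induction l generalizing h with
  | nil => simp [FreeFrom, CatValidFrom, catNum]
  | cons s r ih =>
    simp only [FreeFrom, CatValidFrom, catNum, ih, Nat.add_eq_zero_iff, ite_eq_right_iff,
      one_ne_zero, imp_false]
    constructor
    · rintro ⟨⟨hs, hpos⟩, hr, hcat⟩
      exact ⟨⟨Or.inl ⟨hs, hpos⟩, hr⟩, fun hcat' => hcat'.2.2 (hcat'.1 ▸ hs), hcat⟩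
    · rintro ⟨⟨hs | hs, hr⟩, hcat, hr'⟩
      · exact ⟨hs, hr, hr'⟩
      · exact absurd hs hcat

theorem FreeFrom.mono {h h' : ℤ} {l : List ℤ} (hf : FreeFrom J h l) (hh : h ≤ h') :
    FreeFrom J h' l := by
  induction l generalizing h h' with
  | nil => trivial
  | cons s r ih => exact ⟨⟨hf.1.1, by linarith [hf.1.2]⟩, ih hf.2 (by linarith)⟩

theorem FreeFrom.mem {h : ℤ} {l : List ℤ} (hf : FreeFrom J h l) {x : ℤ} (hx : x ∈ l) :
    x ∈ J := by
  induction l generalizing h with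
  | nil => simp at hx
  | cons s r ih =>
    rcases List.mem_cons.1 hx with rfl | hx
    · exact hf.1.1
    · exact ih hf.2 hx

theorem FreeFrom.nonneg_add_sum {h : ℤ} {l : List ℤ} (hf : FreeFrom J h l) (hh : 0 ≤ h) :
    0 ≤ h + l.sum := by
  induction l generalizing h with
  | nil => simpa using hh
  | cons s r ih => simpa [add_assoc] using ih hf.2 hf.1.2

theorem FreeFrom.nonneg_add_sum_of_prefix {h : ℤ} {l b : List ℤ} (hf : FreeFrom J h l)
    (hh : 0 ≤ h) (hb : b <+: l) : 0 ≤ h + b.sum := by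
  obtain ⟨r, rfl⟩ := hb
  exact (freeFrom_append.1 hf).1.nonneg_add_sum hh

theorem append_one_cons_inj {m₁ m₂ m₁' m₂' : List ℤ} (he : m₁ ++ 1 :: m₂ = m₁' ++ 1 :: m₂')
    (hs : m₁.sum = m₁'.sum) (h₂ : ∀ b, b <+: m₂ → 0 ≤ b.sum)
    (h₂' : ∀ b, b <+: m₂' → 0 ≤ b.sum) : m₁ = m₁' ∧ m₂ = m₂' := by
  wlog hle : m₁.length ≤ m₁'.length generalizing m₁ m₂ m₁' m₂'
  · exact (this he.symm hs.symm h₂' h₂ (by omega)).imp Eq.symm Eq.symm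
  obtain ⟨a, rfl, ha⟩ : ∃ a, m₁' = m₁ ++ a ∧ 1 :: m₂ = a ++ 1 :: m₂' := by
    rcases List.append_eq_append_iff.1 he with h | ⟨a, rfl, ha⟩
    · exact h
    · obtain rfl : a = [] := by simpa using hle
      exact ⟨[], by simp, by simpa using ha.symm⟩
  cases a with
  | nil => simpa using ha
  | cons x b =>
    obtain ⟨rfl, rfl⟩ : x = 1 ∧ m₂ = b ++ 1 :: m₂' := by simpa [eq_comm] using ha
    have := h₂ b (List.prefix_append _ _)
    simp at hs
    omega

theorem FreeFrom.append_one_cons {h : ℤ} {m₁ m₂ : List ℤ} (hm₁ : FreeFrom J h m₁)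
    (h1 : 1 ∈ J) (hpos : 0 ≤ h + m₁.sum) (hm₂ : FreeFrom J 0 m₂) :
    FreeFrom J h (m₁ ++ 1 :: m₂) :=
  freeFrom_append.2 ⟨hm₁, ⟨h1, by omega⟩, hm₂.mono (by omega)⟩

/-- Last-passage decomposition at level `t`: as up-steps are `+1`, the last passage above `t`
is a `+1` step from `t`. -/
theorem FreeFrom.exists_eq_append_one_cons (hJ : ∀ x ∈ J, x ≤ 1) {h t : ℤ} {l : List ℤ}
    (hf : FreeFrom J h l) (hht : h ≤ t) (hlt : t < h + l.sum) :
    ∃ m₁ m₂, l = m₁ ++ 1 :: m₂ ∧ h + m₁.sum = t ∧ FreeFrom J 0 m₂ := by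
  induction l using List.reverseRecOn with
  | nil => simp at hlt; omega
  | append_singleton l s ih =>
    obtain ⟨hl, ⟨hs, -⟩, -⟩ := freeFrom_append.1 hf
    simp only [List.sum_append, List.sum_singleton] at hlt
    by_cases hcross : t < h + l.sum
    · obtain ⟨m₁, m₂, rfl, hm₁, hm₂⟩ := ih hl hcross
      refine ⟨m₁, m₂ ++ [s], by simp, hm₁, freeFrom_append.2 ⟨hm₂, ⟨hs, ?_⟩, trivial⟩⟩
      simp at hlt
      omega
    · obtain rfl : s = 1 := by have := hJ s hs; omega
      exact ⟨l, [], rfl, by omega, trivial⟩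

def meanders (J : Finset ℤ) (n : ℕ) (k : ℤ) : Set (List ℤ) :=
  {l | l.length = n ∧ FreeFrom J 0 l ∧ l.sum = k}

theorem meanders_zero_of_ne_zero {k : ℤ} (hk : k ≠ 0) : meanders J 0 k = ∅ := by
  ext l
  simp only [meanders, List.length_eq_zero_iff, Set.mem_ofPred_eq, Set.mem_empty_iff_false,
    iff_false, not_and]
  rintro rfl - rfl
  exact hk rfl

theorem finite_meanders (n : ℕ) (k : ℤ) : (meanders J n k).Finite := by
  refine ((List.finite_length_eq J n).image (List.map Subtype.val)).subset ?_
  rintro l ⟨hlen, hf, -⟩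
  lift l to List J using fun x hx => hf.mem hx
  exact ⟨l, by simpa using hlen, rfl⟩

theorem append_one_cons_mem_meanders (h1 : 1 ∈ J) {t j : ℤ} (ht : 0 ≤ t) {n a b : ℕ}
    (hab : a + b = n) {m₁ m₂ : List ℤ} (hm₁ : m₁ ∈ meanders J a t) (hm₂ : m₂ ∈ meanders J b j) :
    m₁ ++ 1 :: m₂ ∈ meanders J (n + 1) (t + 1 + j) := by
  obtain ⟨hl₁, hf₁, hs₁⟩ := hm₁
  obtain ⟨hl₂, hf₂, hs₂⟩ := hm₂
  refine ⟨by simp; omega, hf₁.append_one_cons h1 (by omega) hf₂, by simp [hs₁, hs₂]; ring⟩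

theorem card_meanders_add_one (hJ : ∀ x ∈ J, x ≤ 1) (h1 : 1 ∈ J) {t j : ℤ} (ht : 0 ≤ t)
    (hj : 0 ≤ j) (n : ℕ) :
    Nat.card (meanders J (n + 1) (t + 1 + j)) =
      ∑ p ∈ antidiagonal n, Nat.card (meanders J p.1 t) * Nat.card (meanders J p.2 j) := by
  have := fun a k => (finite_meanders (J := J) a k).to_subtype
  let glue : (Σ p : antidiagonal n, meanders J p.1.1 t × meanders J p.1.2 j) →
      meanders J (n + 1) (t + 1 + j) := fun x =>
    ⟨x.2.1.1 ++ 1 :: x.2.2.1, append_one_cons_mem_meanders h1 ht (mem_antidiagonal.1 x.1.2)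
      x.2.1.2 x.2.2.2⟩
  have hglue : Function.Bijective glue := by
    constructor
    · rintro ⟨⟨p, hp⟩, ⟨m₁, hl₁, _, hs₁⟩, ⟨m₂, hl₂, hf₂, _⟩⟩
        ⟨⟨p', hp'⟩, ⟨m₁', hl₁', _, hs₁'⟩, ⟨m₂', hl₂', hf₂', _⟩⟩ he
      obtain ⟨rfl, rfl⟩ := append_one_cons_inj (Subtype.ext_iff.1 he) (hs₁.trans hs₁'.symm)
        (fun b hb => by simpa using hf₂.nonneg_add_sum_of_prefix le_rfl hb)
        (fun b hb => by simpa using hf₂'.nonneg_add_sum_of_prefix le_rfl hb)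
      obtain rfl : p = p' := Prod.ext (hl₁.symm.trans hl₁') (hl₂.symm.trans hl₂')
      rfl
    · rintro ⟨l, hlen, hf, hsum⟩
      obtain ⟨m₁, m₂, rfl, hs₁, hf₂⟩ :=
        hf.exists_eq_append_one_cons hJ ht (by omega)
      obtain ⟨hf₁, -⟩ := freeFrom_append.1 hf
      have hs₂ : m₂.sum = j := by simp at hsum; omega
      have hlen' : m₁.length + m₂.length = n := by simp at hlen; omega
      exact ⟨⟨⟨(m₁.length, m₂.length), mem_antidiagonal.2 hlen'⟩,
        ⟨m₁, rfl, hf₁, by simpa using hs₁⟩, ⟨m₂, rfl, hf₂, hs₂⟩⟩, rfl⟩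
  rw [← Nat.card_eq_of_bijective glue hglue, Nat.card_sigma,
    ← Finset.sum_coe_sort (antidiagonal n)]
  simp only [Nat.card_prod]

end Meanders

theorem mem_lukJ {c : ℕ} {x : ℤ} : x ∈ lukJ c ↔ x = 1 ∨ -(c : ℤ) ≤ x ∧ x ≤ -1 := by
  simp [lukJ]

theorem le_one_of_mem_lukJ {c : ℕ} {x : ℤ} (hx : x ∈ lukJ c) : x ≤ 1 := by
  rcases mem_lukJ.1 hx with h | h <;> omega

theorem one_mem_lukJ (c : ℕ) : (1 : ℤ) ∈ lukJ c :=
  mem_lukJ.2 (Or.inl rfl)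

theorem qCountSize_zero (c k : ℕ) : qCountSize c 0 k = 0 := by
  refine Nat.card_eq_zero.2 (.inl ⟨?_⟩)
  rintro ⟨l, hlen, -, -, l', rfl, -⟩
  simp at hlen

theorem qCountSize_eq_zero_of_le {c k : ℕ} (hk : k ≤ c) (n : ℕ) : qCountSize c n k = 0 := by
  refine Nat.card_eq_zero.2 (.inl ⟨?_⟩)
  rintro ⟨l, -, -, -, l', -, hpos, hnot, -, hsum⟩
  exact hnot (mem_lukJ.2 (Or.inr (by omega)))

theorem qCountSize_succ {c k : ℕ} (hk : c < k) (n : ℕ) :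
    qCountSize c (n + 1) k = Nat.card (meanders (lukJ c) n k) := by
  have hkJ : -(k : ℤ) ∉ lukJ c := by rw [mem_lukJ]; omega
  suffices h : {l : List ℤ | l.length = n + 1 ∧ CatValidFrom (lukJ c) 0 l ∧ l.sum = 0 ∧
      ∃ l' : List ℤ, l = l' ++ [-l'.sum] ∧ 0 < l'.sum ∧ -l'.sum ∉ lukJ c ∧
        catNum (lukJ c) 0 l' = 0 ∧ l'.sum = (k : ℤ)} =
      (· ++ [-(k : ℤ)]) '' meanders (lukJ c) n k by
    rw [qCountSize, ← Set.coe_ofPred, h, Nat.card_image_of_injective (List.append_left_injective _)]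
  ext l
  constructor
  · rintro ⟨hlen, hvalid, -, l', rfl, -, -, hcat, hsum⟩
    rw [catValidFrom_append] at hvalid
    exact ⟨l', ⟨by simpa using hlen,
      freeFrom_iff_catValidFrom_and_catNum_eq_zero.2 ⟨hvalid.1, hcat⟩, hsum⟩, by rw [hsum]⟩
  · rintro ⟨l', ⟨hlen, hf, hsum⟩, rfl⟩
    obtain ⟨hvalid, hcat⟩ := freeFrom_iff_catValidFrom_and_catNum_eq_zero.1 hf
    refine ⟨by simpa using hlen, catValidFrom_append.2 ⟨hvalid, ?_, trivial⟩, by simp [hsum],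
      l', by rw [hsum], by omega, hsum ▸ hkJ, hcat, hsum⟩
    exact Or.inr ⟨by simp [hsum], by simp [hsum]; omega, by simpa [hsum] using hkJ⟩

theorem qCountSize_decomposition_general (c : ℕ) :
    (∀ n k : ℕ, (k < c + 1 ∨ n < 2) → qCountSize c n k = 0) ∧
    (∀ j n : ℕ, 2 ≤ n →
      qCountSize c n (c + 1 + j) =
        ∑ p ∈ Finset.HasAntidiagonal.antidiagonal (n - 2),
          freeMCount c p.1 (c : ℤ) * freeMCount c p.2 (j : ℤ)) := by
  refine ⟨fun n k hnk => ?_, fun j n hn => ?_⟩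
  · rcases le_or_gt k c with hk | hk
    · exact qCountSize_eq_zero_of_le hk n
    obtain _ | _ | n := n
    · exact qCountSize_zero c k
    · rw [qCountSize_succ hk, meanders_zero_of_ne_zero (by omega), Nat.card_of_isEmpty]
    · omega
  · obtain ⟨n, rfl⟩ : ∃ m, n = m + 2 := ⟨n - 2, by omega⟩
    rw [qCountSize_succ (by omega), Nat.add_sub_cancel]
    push_cast
    exact card_meanders_add_one (fun _ => le_one_of_mem_lukJ) (one_mem_lukJ c)
      (Nat.cast_nonneg c) (Nat.cast_nonneg j) n

/-- **Decomposition of excursions ending with a single catastrophe for the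
jump set `{-c, …, -1, +1}`.** `q n k = 0` unless `k ≥ c + 1` and `n ≥ 2`, and
for every `j ≥ 0` and `n ≥ 2`,
`q n (c+1+j) = ∑_{a+b=n-2} M^{(c)}_a · M_{b,j}`. -/
theorem qCountSize_decomposition (c : ℕ) (hc : 1 ≤ c) :
    (∀ n k : ℕ, (k < c + 1 ∨ n < 2) → qCountSize c n k = 0) ∧
    (∀ j n : ℕ, 2 ≤ n →
      qCountSize c n (c + 1 + j) =
        ∑ p ∈ Finset.HasAntidiagonal.antidiagonal (n - 2),
          freeMCount c p.1 (c : ℤ) * freeMCount c p.2 (j : ℤ)) :=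
  qCountSize_decomposition_general c
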